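/- arXiv:1204.6297 — 4 statements merged into one kernel-verified Lean document; each statement's English description precedes it below -/
import Mathlib

section
/- Let σ > 1/2, n ≥ 1, and for each k let c(k) be a complex number with |c(k)| ≤ 1. Then ∫₀¹ ∏_{m=1}^n (1 − c(m) e^{2πiθ_m} p_m^{−σ})^{-1} (1 − c̄(m) e^{−2πiθ_m} p_m^{−σ})^{-1} dθ_m, taken coordinatewise over the unit cube [0,1]^n, is bounded by a constant depending only on σ (not on n or the c(m)). -/
/-!
Writing `a_m = c(m) p_m^{-σ}`, the integrand is a product of functions of one variable each, so
the integral is the product of the one-dimensional integrals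
`∫₀¹ |1 - a e^{2πiθ}|⁻² dθ = (1 - |a|²)⁻¹`, which Cauchy's formula gives at once. Since
`|a_m|² ≤ p_m^{-2σ} ≤ 1/2` and `(1 - x)⁻¹ ≤ e^{2x}` on `[0, 1/2]`, the product is at most
`exp (2 ∑ₖ p_k^{-2σ})`, which is finite because `p_k ≥ k + 2` and `2σ > 1`.
-/

open MeasureTheory Real

lemma one_sub_mul_ne_zero_of_norm_lt {𝕜 : Type*} [NormedDivisionRing 𝕜] {a z : 𝕜} (ha : ‖a‖ < 1) (hz : ‖z‖ ≤ 1) : 1 - a * z ≠ 0 := by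
  refine sub_ne_zero.mpr fun h => ?_
  have : ‖a * z‖ < 1 := by
    rw [norm_mul]; exact (mul_le_of_le_one_right (norm_nonneg a) hz).trans_lt ha
  simp [← h] at this

lemma inv_one_sub_mul_inv {K : Type*} [Field K] {b z : K} (hz : z ≠ 0) : (1 - b * z⁻¹)⁻¹ = z * (z - b)⁻¹ := by
  rw [show 1 - b * z⁻¹ = (z - b) * z⁻¹ by field_simp, mul_inv, inv_inv, mul_comm]

open Complex ComplexConjugate in
lemma integral_inv_one_sub_mul_exp_mul_inv_one_sub_conj_mul_exp {a : ℂ} (ha : ‖a‖ < 1) :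
    ∫ θ in (0 : ℝ)..2 * π, (1 - a * exp (θ * I))⁻¹ * (1 - conj a * exp (-(θ * I)))⁻¹ =
      2 * π * ((1 - ‖a‖ ^ 2)⁻¹ : ℝ) := by
  have hd : DifferentiableOn ℂ (fun z => (1 - a * z)⁻¹) (Metric.closedBall 0 1) :=
    ((differentiableOn_const 1).sub (differentiableOn_id.const_mul a)).inv fun z hz =>
      one_sub_mul_ne_zero_of_norm_lt ha (by simpa using hz)
  have cauchy := hd.circleIntegral_sub_inv_smul (w := conj a) (by simpa using ha)
  simp only [circleIntegral, deriv_circleMap, circleMap_zero, ofReal_one, one_mul,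
    smul_eq_mul] at cauchy
  -- with `z = e^{iθ}` and `dz = i z dθ`, the integral is `I⁻¹ ∮ (z - ā)⁻¹ (1 - a z)⁻¹ dz`
  calc _ = I⁻¹ * ∫ θ in (0 : ℝ)..2 * π,
        exp (θ * I) * I * ((exp (θ * I) - conj a)⁻¹ * (1 - a * exp (θ * I))⁻¹) := by
        rw [← intervalIntegral.integral_const_mul]
        refine intervalIntegral.integral_congr fun θ _ => ?_
        rw [Complex.exp_neg, inv_one_sub_mul_inv (Complex.exp_ne_zero _)]
        field_simp
    _ = 2 * π * ((1 - ‖a‖ ^ 2)⁻¹ : ℝ) := by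
        rw [cauchy, mul_conj, normSq_eq_norm_sq]
        field_simp
        push_cast
        ring

open Complex ComplexConjugate in
lemma setIntegral_Icc_inv_one_sub_mul_exp_mul_inv_one_sub_conj_mul_exp {a : ℂ} (ha : ‖a‖ < 1) :
    ∫ θ in Set.Icc (0 : ℝ) 1,
        (1 - a * exp (2 * π * I * θ))⁻¹ * (1 - conj a * exp (-(2 * π * I * θ)))⁻¹ =
      ((1 - ‖a‖ ^ 2)⁻¹ : ℝ) := by
  have hθ : ∀ θ : ℝ, 2 * π * I * θ = ((2 * π * θ : ℝ) : ℂ) * I := fun θ => by push_cast; ring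
  simp_rw [integral_Icc_eq_integral_Ioc, ← intervalIntegral.integral_of_le zero_le_one, hθ]
  rw [intervalIntegral.integral_comp_mul_left
      (fun t : ℝ => (1 - a * exp (t * I))⁻¹ * (1 - conj a * exp (-(t * I)))⁻¹) (by positivity),
    mul_zero, mul_one, integral_inv_one_sub_mul_exp_mul_inv_one_sub_conj_mul_exp ha, real_smul]
  push_cast
  field_simp

lemma setIntegral_univ_pi_prod {ι 𝕜 : Type*} [Fintype ι] [RCLike 𝕜] {E : ι → Type*}
    [∀ i, MeasureSpace (E i)] [∀ i, SigmaFinite (volume : Measure (E i))]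
    (s : ∀ i, Set (E i)) (f : ∀ i, E i → 𝕜) :
    ∫ x in Set.univ.pi s, ∏ i, f i (x i) = ∏ i, ∫ x in s i, f i x := by
  rw [volume_pi, Measure.restrict_pi_pi, integral_fintype_prod_eq_prod]

lemma inv_one_sub_le_exp_two_mul {x : ℝ} (hx₀ : 0 ≤ x) (hx₁ : x ≤ 1 / 2) :
    (1 - x)⁻¹ ≤ exp (2 * x) := by
  have : (1 - x)⁻¹ ≤ 2 * x + 1 := by
    rw [inv_le_iff_one_le_mul₀ (by linarith)]
    nlinarith
  exact this.trans (add_one_le_exp _)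

lemma prod_inv_one_sub_le_exp_two_mul_tsum {f : ℕ → ℝ} (hf : Summable f) (hf₀ : ∀ k, 0 ≤ f k)
    (hf₁ : ∀ k, f k ≤ 1 / 2) {n : ℕ} {x : Fin n → ℝ} (hx₀ : ∀ m, 0 ≤ x m)
    (hxf : ∀ m, x m ≤ f m) :
    ∏ m, (1 - x m)⁻¹ ≤ exp (2 * ∑' k, f k) := calc
  ∏ m, (1 - x m)⁻¹ ≤ ∏ m : Fin n, exp (2 * f m) := by
    refine Finset.prod_le_prod (fun m _ => inv_nonneg.mpr ?_) fun m _ => ?_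
    · linarith [hxf m, hf₁ m]
    · exact (inv_one_sub_le_exp_two_mul (hx₀ m) ((hxf m).trans (hf₁ m))).trans
        (exp_le_exp.mpr (by linarith [hxf m]))
  _ = exp (2 * ∑ k ∈ Finset.range n, f k) := by
    rw [← exp_sum, Finset.mul_sum, Fin.sum_univ_eq_sum_range (fun k => 2 * f k)]
  _ ≤ exp (2 * ∑' k, f k) := by
    gcongr
    exact hf.sum_le_tsum _ fun k _ => hf₀ k

lemma summable_nth_prime_rpow_neg {s : ℝ} (hs : 1 < s) :
    Summable fun k => (Nat.nth Nat.Prime k : ℝ) ^ (-s) := by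
  have hshift : Summable fun k : ℕ => ((k + 2 : ℕ) : ℝ) ^ (-s) :=
    (summable_nat_add_iff 2).mpr (summable_nat_rpow.mpr (by linarith))
  refine hshift.of_nonneg_of_le (fun k => by positivity) fun k => ?_
  exact rpow_le_rpow_of_nonpos (by positivity) (mod_cast Nat.add_two_le_nth_prime k) (by linarith)

lemma nth_prime_rpow_neg_le_half {s : ℝ} (hs : 1 ≤ s) (k : ℕ) :
    (Nat.nth Nat.Prime k : ℝ) ^ (-s) ≤ 1 / 2 := calc
  (Nat.nth Nat.Prime k : ℝ) ^ (-s) ≤ 2 ^ (-s) :=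
    rpow_le_rpow_of_nonpos two_pos (mod_cast (Nat.prime_nth_prime k).two_le) (by linarith)
  _ ≤ 2 ^ (-1 : ℝ) := rpow_le_rpow_of_exponent_le one_le_two (by linarith)
  _ = 1 / 2 := by rw [rpow_neg_one, one_div]

open ComplexConjugate in
lemma conj_natCast_cpow_ofReal (k : ℕ) (s : ℝ) : conj ((k : ℂ) ^ (s : ℂ)) = (k : ℂ) ^ (s : ℂ) := by
  rw [← Complex.ofReal_natCast, ← Complex.ofReal_cpow k.cast_nonneg, Complex.conj_ofReal]

lemma norm_mul_nth_prime_cpow_neg_sq_le {z : ℂ} (hz : ‖z‖ ≤ 1) (σ : ℝ) (k : ℕ) :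
    ‖z * (Nat.nth Nat.Prime k : ℂ) ^ (-(σ : ℂ))‖ ^ 2 ≤ (Nat.nth Nat.Prime k : ℝ) ^ (-(2 * σ)) := by
  have hp : 0 < Nat.nth Nat.Prime k := (Nat.prime_nth_prime k).pos
  rw [norm_mul, Complex.norm_natCast_cpow_of_pos hp, Complex.neg_re, Complex.ofReal_re, mul_pow,
    ← rpow_mul_natCast (by positivity), Nat.cast_ofNat, neg_mul, mul_comm σ]
  exact mul_le_of_le_one_left (by positivity) (pow_le_one₀ (norm_nonneg z) hz)

theorem integral_euler_factors_bounded (σ : ℝ) (hσ : 1 / 2 < σ) :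
    ∃ A : ℝ, ∀ n : ℕ, 1 ≤ n → ∀ c : ℕ → ℂ, (∀ k, ‖c k‖ ≤ 1) →
      ‖∫ θ : Fin n → ℝ in Set.univ.pi (fun _ => Set.Icc (0 : ℝ) 1),
          ∏ m : Fin n,
            ((1 - c m * Complex.exp (2 * π * Complex.I * θ m)
                * (Nat.nth Nat.Prime m : ℂ) ^ (-(σ : ℂ)))⁻¹
              * (1 - (starRingEnd ℂ) (c m) * Complex.exp (-(2 * π * Complex.I * θ m))
                * (Nat.nth Nat.Prime m : ℂ) ^ (-(σ : ℂ)))⁻¹)‖ ≤ A := by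
  refine ⟨exp (2 * ∑' k, (Nat.nth Nat.Prime k : ℝ) ^ (-(2 * σ))), fun n _ c hc => ?_⟩
  set a : Fin n → ℂ := fun m => c m * (Nat.nth Nat.Prime m : ℂ) ^ (-(σ : ℂ))
  have ha : ∀ m, ‖a m‖ ^ 2 ≤ (Nat.nth Nat.Prime m : ℝ) ^ (-(2 * σ)) := fun m =>
    norm_mul_nth_prime_cpow_neg_sq_le (hc m) σ m
  have ha_half : ∀ m, ‖a m‖ ^ 2 ≤ 1 / 2 := fun m =>
    (ha m).trans (nth_prime_rpow_neg_le_half (by linarith) m)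
  have ha_lt_one : ∀ m, ‖a m‖ < 1 := fun m => by nlinarith [ha_half m, norm_nonneg (a m)]
  have hfactor : ∀ (m : Fin n) (t : ℝ),
      (1 - c m * Complex.exp (2 * π * Complex.I * t) * (Nat.nth Nat.Prime m : ℂ) ^ (-(σ : ℂ)))⁻¹
        * (1 - (starRingEnd ℂ) (c m) * Complex.exp (-(2 * π * Complex.I * t))
          * (Nat.nth Nat.Prime m : ℂ) ^ (-(σ : ℂ)))⁻¹ =
      (1 - a m * Complex.exp (2 * π * Complex.I * t))⁻¹
        * (1 - (starRingEnd ℂ) (a m) * Complex.exp (-(2 * π * Complex.I * t)))⁻¹ := by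
    intro m t
    simp only [a, map_mul, ← Complex.ofReal_neg, conj_natCast_cpow_ofReal]
    ring
  calc _ = ‖∏ m, (((1 - ‖a m‖ ^ 2)⁻¹ : ℝ) : ℂ)‖ := by
        simp_rw [hfactor]
        rw [setIntegral_univ_pi_prod (fun _ => Set.Icc 0 1) fun m (t : ℝ) =>
          (1 - a m * Complex.exp (2 * π * Complex.I * t))⁻¹
            * (1 - (starRingEnd ℂ) (a m) * Complex.exp (-(2 * π * Complex.I * t)))⁻¹]
        simp_rw [setIntegral_Icc_inv_one_sub_mul_exp_mul_inv_one_sub_conj_mul_exp (ha_lt_one _)]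
    _ = ∏ m, (1 - ‖a m‖ ^ 2)⁻¹ := by
        rw [← Complex.ofReal_prod, Complex.norm_of_nonneg]
        exact Finset.prod_nonneg fun m _ => inv_nonneg.mpr (by linarith [ha_half m])
    _ ≤ _ := prod_inv_one_sub_le_exp_two_mul_tsum (summable_nth_prime_rpow_neg (by linarith))
        (fun k => by positivity) (fun k => nth_prime_rpow_neg_le_half (by linarith) k)
        (fun m => by positivity) ha
end

section
/- Let χ₁,…,χ_J be complex characters of a finite abelian group G with χ_j ≠ χ_k and χ_j ≠ conj(χ_k) for j ≠ k, and let b₁,…,b_J ∈ ℂ. Then there exists g ∈ G such that |Σ_{j=1}^J Re(χ_j(g)) b_j|² ≥ (1/2) Σ_{j=1}^J |b_j|². -/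
/-!
Write `r_j(g) = Re χ_j(g)`. Since `Re z · Re w = (Re (z w) + Re (z w̄)) / 2`, the inner products
`∑_g r_j(g) r_k(g)` are real parts of sums of the characters `χ_j χ_k` and `χ_j χ̄_k` over `G`.
For `j ≠ k` neither character is trivial, by the hypotheses, so the functions `r_j` are
orthogonal; and `∑_g r_j(g)² ≥ |G| / 2` because `χ_j χ̄_j = 1` while `∑_g χ_j²(g) ∈ {0, |G|}`.
By Pythagoras `∑_g |∑_j r_j(g) b_j|² ≥ (|G| / 2) ∑_j |b_j|²`, so some term of the left-hand sum
is at least the average `(1 / 2) ∑_j |b_j|²`.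
-/

open Finset Complex ComplexConjugate

namespace MonoidHom

variable {G : Type*} [Group G]

theorem norm_apply_eq_one [Finite G] (χ : G →* ℂ) (g : G) : ‖χ g‖ = 1 :=
  norm_eq_one_of_pow_eq_one (by rw [← map_pow, pow_card_eq_one', map_one]) Nat.card_pos.ne'

theorem mul_conj_comp_eq_one_iff [Finite G] (χ ψ : G →* ℂ) :
    χ * ((starRingEnd ℂ) : ℂ →* ℂ).comp ψ = 1 ↔ χ = ψ := by
  have hψ (g : G) : ψ g * conj (ψ g) = 1 := by
    rw [mul_conj', norm_apply_eq_one]; norm_num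
  constructor
  · intro h
    ext g
    have hg : χ g * conj (ψ g) = 1 := by simpa using DFunLike.congr_fun h g
    exact mul_right_cancel₀ (left_ne_zero_of_mul_eq_one (by rw [mul_comm]; exact hψ g))
      (hg.trans (hψ g).symm)
  · rintro rfl
    ext g
    simpa using hψ g

theorem mul_eq_one_iff_eq_conj_comp [Finite G] (χ ψ : G →* ℂ) :
    χ * ψ = 1 ↔ χ = ((starRingEnd ℂ) : ℂ →* ℂ).comp ψ := by
  have hψ : ((starRingEnd ℂ) : ℂ →* ℂ).comp (((starRingEnd ℂ) : ℂ →* ℂ).comp ψ) = ψ := by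
    ext g; simp
  conv_lhs => rw [← hψ]
  exact mul_conj_comp_eq_one_iff χ _

theorem sum_re_mul_re [Fintype G] (χ ψ : G →* ℂ) :
    ∑ g, (χ g).re * (ψ g).re =
      ((∑ g, (χ * ψ) g).re + (∑ g, (χ * ((starRingEnd ℂ) : ℂ →* ℂ).comp ψ) g).re) / 2 := by
  simp only [re_sum, ← sum_add_distrib, sum_div]
  refine sum_congr rfl fun g _ => ?_
  simp only [mul_apply, comp_apply, MonoidHom.coe_coe, mul_re, conj_re, conj_im]
  ring

theorem sum_re_mul_re_eq_zero [Fintype G] {χ ψ : G →* ℂ} (hne : χ ≠ ψ)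
    (hne_conj : χ ≠ ((starRingEnd ℂ) : ℂ →* ℂ).comp ψ) :
    ∑ g, (χ g).re * (ψ g).re = 0 := by
  rw [sum_re_mul_re,
    sum_hom_units_eq_zero _ (mt (mul_eq_one_iff_eq_conj_comp χ ψ).mp hne_conj),
    sum_hom_units_eq_zero _ (mt (mul_conj_comp_eq_one_iff χ ψ).mp hne)]
  simp

theorem card_div_two_le_sum_re_sq [Fintype G] (χ : G →* ℂ) :
    (Fintype.card G : ℝ) / 2 ≤ ∑ g, (χ g).re ^ 2 := by
  classical
  simp only [sq, sum_re_mul_re, sum_hom_units, (mul_conj_comp_eq_one_iff χ χ).mpr rfl]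
  split_ifs <;> simp

end MonoidHom

theorem sum_norm_sq_sum_ofReal_mul_of_pairwise_orthogonal {ι α : Type*} [Fintype ι] [Fintype α]
    (r : ι → α → ℝ) (b : ι → ℂ) (horth : Pairwise fun j k => ∑ g, r j g * r k g = 0) :
    ∑ g, ‖∑ j, (r j g : ℂ) * b j‖ ^ 2 = ∑ j, ‖b j‖ ^ 2 * ∑ g, r j g ^ 2 := by
  apply ofReal_injective
  calc ((∑ g, ‖∑ j, (r j g : ℂ) * b j‖ ^ 2 : ℝ) : ℂ)
      = ∑ j, ∑ k, ((∑ g, r j g * r k g : ℝ) : ℂ) * (b j * conj (b k)) := by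
        push_cast
        simp only [← mul_conj', map_sum, map_mul, conj_ofReal, sum_mul, mul_sum]
        rw [sum_comm]
        simp_rw [sum_comm (s := (univ : Finset α))]
        rw [sum_comm]
        exact sum_congr rfl fun j _ => sum_congr rfl fun k _ => sum_congr rfl fun g _ => by ring
    _ = ∑ j, ((∑ g, r j g * r j g : ℝ) : ℂ) * (b j * conj (b j)) :=
        sum_congr rfl fun j _ => sum_eq_single j
          (fun k _ hkj => by rw [horth hkj.symm]; simp) (by simp)
    _ = _ := by
        push_cast
        simp only [mul_conj', sq]
        exact sum_congr rfl fun j _ => by ring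

theorem exists_real_part_character_sum_large (G : Type*) [CommGroup G] [Fintype G]
    (J : ℕ) (χ : Fin J → (G →* ℂ)) (b : Fin J → ℂ)
    (hne : ∀ j k : Fin J, j ≠ k → χ j ≠ χ k ∧
      χ j ≠ ((starRingEnd ℂ) : ℂ →* ℂ).comp (χ k)) :
    ∃ g : G, ‖∑ j : Fin J, ((χ j g).re : ℂ) * b j‖ ^ 2 ≥
      (1 / 2) * ∑ j : Fin J, ‖b j‖ ^ 2 := by
  have hpythagoras := sum_norm_sq_sum_ofReal_mul_of_pairwise_orthogonal
    (fun j g => (χ j g).re) b fun j k hjk =>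
      MonoidHom.sum_re_mul_re_eq_zero (hne j k hjk).1 (hne j k hjk).2
  have haverage : ∑ _g : G, (1 / 2) * ∑ j, ‖b j‖ ^ 2 ≤
      ∑ g : G, ‖∑ j, ((χ j g).re : ℂ) * b j‖ ^ 2 := by
    rw [hpythagoras, sum_const, card_univ, nsmul_eq_mul, mul_sum, mul_sum]
    refine sum_le_sum fun j _ => ?_
    have hdiag := MonoidHom.card_div_two_le_sum_re_sq (χ j)
    nlinarith [sq_nonneg ‖b j‖]
  obtain ⟨g, -, hg⟩ := exists_le_of_sum_le univ_nonempty haverage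
  exact ⟨g, hg⟩
end

section
/- Let f(s) = Σ_{n=1}^∞ a_n n^{−s} be a Dirichlet series absolutely and uniformly convergent for Re s > 1, not identically zero. Suppose f(ρ) = 0 with ρ = β + iγ, β > 1. Then for any fixed 0 < δ < β − 1 there is a constant c_δ > 0 such that for all sufficiently large T, f has at least c_δ T zeros in the region |Re s − β| < δ, 0 < Im s < T. -/
/-!
Uniform convergence makes `f` the uniform limit of the Dirichlet polynomials
`P_N(s) = ∑_{n<N} a_{n+1} (n+1)^{-s}` on `Re s ≥ β - δ`, and `P_N(s + it) - P_N(s)` is small as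
soon as all the phases `(n+1)^{it}`, `n < N`, are close to `1`. The flow `t ↦ ((n+1)^{it})_{n<N}`
on the compact torus returns near `1` at relatively dense times, so `f` has relatively dense
`ε`-almost periods `t`. Choose a small circle around the zero `ρ` on which `|f| ≥ m > 0`; for an
`m/2`-almost period `t`, the function `f(· + it)` has modulus `< m/2` at `ρ` and `> m/2` on the
circle, so it vanishes inside. Translating `ρ` into each window `(jL, (j+1)L)` of the imaginary
axis yields one zero per window, i.e. `≫ T` zeros of height below `T`.
-/

open Filter Metric Set Pointwise Complex Topology

def IsRelativelyDense (S : Set ℝ) : Prop :=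
  ∃ M : ℝ, ∀ x : ℝ, ∃ t ∈ S, t ∈ Icc x (x + M)

lemma isRelativelyDense_preimage_of_compactSpace {G : Type*} [Group G] [TopologicalSpace G]
    [IsTopologicalGroup G] [CompactSpace G] {φ : ℝ → G} (hφ : ∀ s t, φ (s + t) = φ s * φ t)
    {U : Set G} (hU : IsOpen U) (hU₁ : 1 ∈ U) : IsRelativelyDense (φ ⁻¹' U) := by
  have hcover : closure (range φ) ⊆ ⋃ t : ℝ, φ t • U := by
    intro k hk
    obtain ⟨_, ⟨u, hu, hku⟩, t, rfl⟩ :=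
      mem_closure_iff.1 hk (k • U⁻¹) (hU.inv.smul k) ⟨1, by simpa using hU₁, mul_one k⟩
    refine mem_iUnion.2 ⟨t, u⁻¹, hu, ?_⟩
    simp only [smul_eq_mul] at hku ⊢
    rw [← hku, mul_inv_cancel_right]
  -- finitely many translates `φ t • U` cover the orbit closure; a bound `B` on their `|t|`
  -- gives every `x` a return time in `[x, x + 2B]`
  obtain ⟨T, hT⟩ :=
    isClosed_closure.isCompact.elim_finite_subcover _ (fun t => hU.smul (φ t)) hcover
  set B := ∑ t ∈ T, |t|
  have hB : ∀ t ∈ T, |t| ≤ B := fun t ht => Finset.single_le_sum (fun t _ => abs_nonneg t) ht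
  refine ⟨2 * B, fun x => ?_⟩
  obtain ⟨t₀, ht₀, u, hu, hφu⟩ := mem_iUnion₂.1 (hT (subset_closure (mem_range_self (x + B))))
  have hφt : φ (x + B - t₀) = u := by
    simp only [smul_eq_mul] at hφu
    rw [← add_sub_cancel t₀ (x + B), hφ] at hφu
    exact (mul_left_cancel hφu).symm
  obtain ⟨h₁, h₂⟩ := abs_le.1 (hB t₀ ht₀)
  exact ⟨x + B - t₀, show φ (x + B - t₀) ∈ U from hφt ▸ hu, by linarith, by linarith⟩

noncomputable def dirichletPartialSum (a : ℕ → ℂ) (N : ℕ) (s : ℂ) : ℂ :=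
  ∑ n ∈ Finset.range N, a (n + 1) / ((n : ℂ) + 1) ^ s

lemma differentiable_dirichletPartialSum (a : ℕ → ℂ) (N : ℕ) :
    Differentiable ℂ (dirichletPartialSum a N) := by
  have hn (n : ℕ) : ((n : ℂ) + 1) ≠ 0 := Nat.cast_add_one_ne_zero n
  unfold dirichletPartialSum
  fun_prop (disch := simp [hn])

lemma natCast_add_one_cpow_add_mul_I (n : ℕ) (w : ℂ) (t : ℝ) :
    ((n : ℂ) + 1) ^ (w + t * I) = ((n : ℂ) + 1) ^ w * Circle.exp (t * Real.log (n + 1)) := by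
  have hn : (n : ℂ) + 1 ≠ 0 := Nat.cast_add_one_ne_zero n
  rw [cpow_add _ _ hn, Circle.coe_exp, cpow_def_of_ne_zero hn (t * I), ofReal_mul,
    ofReal_log (by positivity)]
  push_cast
  ring_nf

lemma one_le_norm_natCast_add_one_cpow (n : ℕ) {w : ℂ} (hw : 0 ≤ w.re) :
    1 ≤ ‖((n : ℂ) + 1) ^ w‖ := by
  rw [← Nat.cast_succ, norm_natCast_cpow_of_pos n.succ_pos]
  exact Real.one_le_rpow (by simp) hw

lemma norm_dirichletPartialSum_add_mul_I_sub_le (a : ℕ → ℂ) (N : ℕ) {w : ℂ} (hw : 0 ≤ w.re)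
    {t ε : ℝ} (ht : ∀ n < N, ‖(Circle.exp (t * Real.log (n + 1)) : ℂ) - 1‖ ≤ ε) :
    ‖dirichletPartialSum a N (w + t * I) - dirichletPartialSum a N w‖ ≤
      (∑ n ∈ Finset.range N, ‖a (n + 1)‖) * ε := by
  rw [dirichletPartialSum, dirichletPartialSum, ← Finset.sum_sub_distrib, Finset.sum_mul]
  refine (norm_sum_le _ _).trans (Finset.sum_le_sum fun n hn => ?_)
  rw [natCast_add_one_cpow_add_mul_I]
  set c := ((n : ℂ) + 1) ^ w
  set e := Circle.exp (t * Real.log (n + 1))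
  have hc : 1 ≤ ‖c‖ := one_le_norm_natCast_add_one_cpow n hw
  have hc₀ : c ≠ 0 := norm_pos_iff.1 (one_pos.trans_le hc)
  have hdiff : a (n + 1) / (c * e) - a (n + 1) / c = a (n + 1) / (c * e) * (1 - e) := by
    field_simp [Circle.coe_ne_zero e]
  calc ‖a (n + 1) / (c * e) - a (n + 1) / c‖ = ‖a (n + 1)‖ / ‖c‖ * ‖(e : ℂ) - 1‖ := by
        rw [hdiff, norm_mul, norm_div, norm_mul, Circle.norm_coe, mul_one, norm_sub_rev]
    _ ≤ ‖a (n + 1)‖ * ε := by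
        gcongr
        · exact div_le_self (norm_nonneg _) hc
        · exact ht n (Finset.mem_range.1 hn)

lemma differentiableOn_of_tendstoUniformlyOn_dirichletPartialSum {a : ℕ → ℂ} {f : ℂ → ℂ}
    {σ : ℝ} (hf : ∀ ε : ℝ, 0 < ε →
      TendstoUniformlyOn (dirichletPartialSum a) f atTop {s : ℂ | σ + ε ≤ s.re}) :
    DifferentiableOn ℂ f {s : ℂ | σ < s.re} := by
  refine TendstoLocallyUniformlyOn.differentiableOn
    (tendstoLocallyUniformlyOn_of_forall_exists_nhds (p := atTop) fun s hs => ?_)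
    (Eventually.of_forall fun N => (differentiable_dirichletPartialSum a N).differentiableOn)
    (isOpen_lt continuous_const continuous_re)
  have hs : σ < s.re := hs
  refine ⟨_, mem_nhdsWithin_of_mem_nhds ?_, hf ((s.re - σ) / 2) (by linarith)⟩
  exact continuous_re.continuousAt.preimage_mem_nhds (Ici_mem_nhds (by linarith))

lemma isRelativelyDense_almostPeriods {a : ℕ → ℂ} {f : ℂ → ℂ} {σ : ℝ} (hσ : 0 ≤ σ)
    (hf : TendstoUniformlyOn (dirichletPartialSum a) f atTop {s : ℂ | σ ≤ s.re})
    {ε : ℝ} (hε : 0 < ε) :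
    IsRelativelyDense {t : ℝ | ∀ w : ℂ, σ ≤ w.re → ‖f (w + t * I) - f w‖ < ε} := by
  obtain ⟨N, hN⟩ := (Metric.tendstoUniformlyOn_iff.1 hf (ε / 3) (by positivity)).exists
  set A := ∑ n ∈ Finset.range N, ‖a (n + 1)‖
  have hA : 0 ≤ A := by positivity
  set η := ε / (3 * (A + 1))
  have hAη : A * η ≤ ε / 3 := by
    rw [mul_div, div_le_div_iff₀ (by positivity) (by norm_num)]
    nlinarith
  let φ : ℝ → Fin N → Circle := fun t n => Circle.exp (t * Real.log (n + 1))
  have hφ (s t : ℝ) : φ (s + t) = φ s * φ t := by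
    ext1 n
    simp only [φ, add_mul, Circle.exp_add, Pi.mul_apply]
  have hU : IsOpen {g : Fin N → Circle | ∀ n, ‖(g n : ℂ) - 1‖ < η} := by
    simp only [ofPred_forall]
    exact isOpen_iInter_of_finite fun n => isOpen_lt (by fun_prop) continuous_const
  obtain ⟨M, hM⟩ := isRelativelyDense_preimage_of_compactSpace hφ hU
    fun n => by simpa using by positivity
  refine ⟨M, fun x => ?_⟩
  obtain ⟨t, ht, htx⟩ := hM x
  refine ⟨t, fun w hw => ?_, htx⟩
  have hP := norm_dirichletPartialSum_add_mul_I_sub_le a N (hσ.trans hw) (ε := η)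
    fun n hn => (ht ⟨n, hn⟩).le
  have h₁ := hN (w + t * I) (by simpa using hw)
  have h₂ := hN w hw
  rw [← dist_eq_norm] at hP ⊢
  calc dist (f (w + t * I)) (f w)
      ≤ dist (f (w + t * I)) (dirichletPartialSum a N (w + t * I)) +
        dist (dirichletPartialSum a N (w + t * I)) (dirichletPartialSum a N w) +
        dist (dirichletPartialSum a N w) (f w) := dist_triangle4 _ _ _ _
    _ < ε / 3 + ε / 3 + ε / 3 := by rw [dist_comm] at h₂; linarith
    _ = ε := by ring

lemma exists_zero_of_norm_lt_of_forall_sphere_le {g : ℂ → ℂ} {z₀ : ℂ} {r m : ℝ} (hr : 0 < r)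
    (hg : DifferentiableOn ℂ g (closedBall z₀ r)) (hm : ∀ z ∈ sphere z₀ r, m ≤ ‖g z‖)
    (hz₀ : ‖g z₀‖ < m) : ∃ z ∈ closedBall z₀ r, g z = 0 := by
  by_contra! hne
  have hm₀ : 0 < m := (norm_nonneg _).trans_lt hz₀
  have hg₀ : 0 < ‖g z₀‖ := norm_pos_iff.2 (hne z₀ (mem_closedBall_self hr.le))
  have hinv : DiffContOnCl ℂ (fun z => (g z)⁻¹) (ball z₀ r) := by
    refine DifferentiableOn.diffContOnCl ?_
    rw [closure_ball z₀ hr.ne']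
    exact hg.inv hne
  have hbound : ‖(g z₀)⁻¹‖ ≤ m⁻¹ := by
    refine norm_le_of_forall_mem_frontier_norm_le isBounded_ball hinv (fun z hz => ?_)
      (subset_closure (mem_ball_self hr))
    rw [frontier_ball z₀ hr.ne'] at hz
    rw [norm_inv]
    exact inv_anti₀ hm₀ (hm z hz)
  rw [norm_inv, inv_le_inv₀ hg₀ hm₀] at hbound
  exact hbound.not_gt hz₀

lemma exists_zero_of_norm_sub_lt {f g : ℂ → ℂ} {z₀ : ℂ} {r m : ℝ} (hr : 0 < r)
    (hg : DifferentiableOn ℂ g (closedBall z₀ r)) (hf₀ : f z₀ = 0)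
    (hfm : ∀ z ∈ sphere z₀ r, m ≤ ‖f z‖) (hfg : ∀ z ∈ closedBall z₀ r, ‖g z - f z‖ < m / 2) :
    ∃ z ∈ closedBall z₀ r, g z = 0 := by
  refine exists_zero_of_norm_lt_of_forall_sphere_le hr hg (m := m / 2) (fun z hz => ?_) ?_
  · have := hfg z (sphere_subset_closedBall hz)
    have := norm_sub_norm_le (f z) (g z)
    rw [norm_sub_rev] at this
    linarith [hfm z hz]
  · simpa [hf₀] using hfg z₀ (mem_closedBall_self hr.le)

section IsolatedZeros

variable {𝕜 E : Type*} [NontriviallyNormedField 𝕜] [NormedAddCommGroup E] [NormedSpace 𝕜 E]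
  {f : 𝕜 → E} {U : Set 𝕜}

lemma AnalyticOnNhd.finite_inter_zeros_of_isCompact (hf : AnalyticOnNhd 𝕜 f U)
    (hU : IsPreconnected U) (hne : ∃ z ∈ U, f z ≠ 0) {K : Set 𝕜} (hK : IsCompact K)
    (hKU : K ⊆ U) : (K ∩ {z | f z = 0}).Finite := by
  obtain ⟨z, hz, hfz⟩ := hne
  rcases hf.eqOn_zero_or_eventually_ne_zero_of_preconnected hU with h | h
  · exact absurd (h hz) hfz
  · simpa [sdiff_eq, compl_def] using
      hK.finite_sdiff_of_mem_codiscreteWithin (codiscreteWithin_mono hKU h)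

lemma AnalyticOnNhd.eventually_ne_zero_nhdsNE (hf : AnalyticOnNhd 𝕜 f U)
    (hU : IsPreconnected U) (hne : ∃ z ∈ U, f z ≠ 0) {x : 𝕜} (hx : x ∈ U) :
    ∀ᶠ z in 𝓝[≠] x, f z ≠ 0 := by
  obtain ⟨z, hz, hfz⟩ := hne
  refine (hf x hx).eventually_eq_zero_or_eventually_ne_zero.resolve_left fun h => hfz ?_
  exact hf.eqOn_zero_of_preconnected_of_eventuallyEq_zero hU hx h hz

end IsolatedZeros

lemma exists_forall_sphere_of_eventually_nhdsNE {X : Type*} [PseudoMetricSpace X]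
    {p : X → Prop} {x : X} (h : ∀ᶠ z in 𝓝[≠] x, p z) {R : ℝ} (hR : 0 < R) :
    ∃ r ∈ Ioo 0 R, ∀ z ∈ sphere x r, p z := by
  obtain ⟨ε, hε, hp⟩ := Metric.eventually_nhds_iff.1 (eventually_nhdsWithin_iff.1 h)
  set r := min (R / 2) (ε / 2)
  have hr : 0 < r := by positivity
  refine ⟨r, ⟨hr, (min_le_left _ _).trans_lt (half_lt_self hR)⟩, fun z hz => hp ?_ ?_⟩
  · rw [mem_sphere.1 hz]
    exact (min_le_right _ _).trans_lt (half_lt_self hε)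
  · rintro rfl
    rw [mem_sphere, dist_self] at hz
    exact hr.ne hz

lemma closedBall_subset_reProdIm (w : ℂ) (r : ℝ) :
    closedBall w r ⊆ Icc (w.re - r) (w.re + r) ×ℂ Icc (w.im - r) (w.im + r) := by
  intro z hz
  rw [mem_closedBall, dist_eq] at hz
  obtain ⟨hre₁, hre₂⟩ := abs_le.1 ((abs_re_le_norm (z - w)).trans hz)
  obtain ⟨him₁, him₂⟩ := abs_le.1 ((abs_im_le_norm (z - w)).trans hz)
  simp only [sub_re, sub_im] at hre₁ hre₂ him₁ him₂
  exact ⟨⟨by linarith, by linarith⟩, by linarith, by linarith⟩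

lemma exists_zero_near_add_mul_I_of_almostPeriod {f : ℂ → ℂ} {σ : ℝ}
    (hf : DifferentiableOn ℂ f {s : ℂ | σ ≤ s.re}) {ρ : ℂ} (hρ : f ρ = 0) {r m : ℝ} (hr : 0 < r)
    (hball : closedBall ρ r ⊆ {s : ℂ | σ ≤ s.re}) (hm : ∀ z ∈ sphere ρ r, m ≤ ‖f z‖) {t : ℝ}
    (ht : ∀ w : ℂ, σ ≤ w.re → ‖f (w + t * I) - f w‖ < m / 2) :
    ∃ z, f z = 0 ∧ z ∈ Icc (ρ.re - r) (ρ.re + r) ×ℂ Icc (ρ.im + t - r) (ρ.im + t + r) := by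
  obtain ⟨z, hz, hfz⟩ := exists_zero_of_norm_sub_lt hr (g := fun z => f (z + t * I))
    (hf.comp (by fun_prop) fun z hz => by simpa using hball hz) hρ hm fun z hz => ht z (hball hz)
  obtain ⟨⟨hre₁, hre₂⟩, him₁, him₂⟩ := closedBall_subset_reProdIm ρ r hz
  refine ⟨z + t * I, hfz, ?_⟩
  simp only [mem_reProdIm, add_re, add_im, re_ofReal_mul, im_ofReal_mul, I_re, I_im, mul_zero,
    mul_one, add_zero, mem_Icc]
  exact ⟨⟨hre₁, hre₂⟩, by linarith, by linarith⟩

lemma finite_setOf_eq_zero_abs_re_sub_lt {f : ℂ → ℂ} {σ : ℝ}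
    (hf : AnalyticOnNhd ℂ f {s : ℂ | σ < s.re}) (hnz : ∃ s : ℂ, σ < s.re ∧ f s ≠ 0) {β δ : ℝ}
    (hβδ : σ < β - δ) (T : ℝ) :
    {z : ℂ | (f z = 0 ∧ |z.re - β| < δ) ∧ 0 < z.im ∧ z.im < T}.Finite := by
  have hK := (isCompact_Icc (a := β - δ) (b := β + δ)).reProdIm (isCompact_Icc (a := 0) (b := T))
  refine (hf.finite_inter_zeros_of_isCompact (convex_halfSpace_re_gt σ).isPreconnected hnz hK
    fun z hz => lt_of_lt_of_le hβδ hz.1.1).subset ?_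
  rintro z ⟨⟨hfz, hre⟩, him₁, him₂⟩
  obtain ⟨hre₁, hre₂⟩ := abs_lt.1 hre
  exact ⟨⟨⟨by linarith, by linarith⟩, him₁.le, him₂.le⟩, hfz⟩

lemma exists_pos_mul_le_ncard_of_forall_exists_mem_Ioo {α : Type*} {p : α → Prop}
    {g : α → ℝ} {L : ℝ} (hL : 0 < L) (hfin : ∀ T, {z | p z ∧ 0 < g z ∧ g z < T}.Finite)
    (h : ∀ j : ℕ, ∃ z, p z ∧ g z ∈ Ioo (j * L) ((j + 1) * L)) :
    ∃ c : ℝ, 0 < c ∧ ∃ T₀ : ℝ, ∀ T : ℝ, T₀ ≤ T →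
      c * T ≤ {z | p z ∧ 0 < g z ∧ g z < T}.ncard := by
  choose ζ hζ hζL using h
  have hmono : StrictMono (g ∘ ζ) := strictMono_nat_of_lt_succ fun j => by
    have := (hζL j).2
    have := (hζL (j + 1)).1
    push_cast at *
    simp only [Function.comp_apply]
    linarith
  refine ⟨1 / (2 * L), by positivity, 2 * L, fun T hT => ?_⟩
  set k := ⌊T / L⌋₊
  have hsub : ζ '' Finset.range k ⊆ {z | p z ∧ 0 < g z ∧ g z < T} := by
    rintro _ ⟨j, hj, rfl⟩
    have hj : (j : ℝ) + 1 ≤ k := by exact_mod_cast Finset.mem_range.1 hj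
    have hk : (k : ℝ) * L ≤ T := (le_div_iff₀ hL).1 (Nat.floor_le (div_nonneg (by linarith) hL.le))
    obtain ⟨h₁, h₂⟩ := hζL j
    exact ⟨hζ j, lt_of_le_of_lt (by positivity) h₁, by nlinarith⟩
  have hcard : (k : ℝ) ≤ {z | p z ∧ 0 < g z ∧ g z < T}.ncard := by
    have := Set.ncard_le_ncard hsub (hfin T)
    rw [Set.ncard_image_of_injective _ hmono.injective.of_comp, Set.ncard_coe_finset,
      Finset.card_range] at this
    exact_mod_cast this
  have hfloor : T / L - 1 < k := Nat.sub_one_lt_floor _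
  have : 1 / (2 * L) * T = T / L - T / (2 * L) := by field_simp; ring
  have : 1 ≤ T / (2 * L) := (one_le_div (by positivity)).2 hT
  linarith

theorem zeros_in_strip_of_dirichlet_series_zero_general
    (f : ℂ → ℂ) (a : ℕ → ℂ)
    (hunif : ∀ ε : ℝ, 0 < ε →
      TendstoUniformlyOn
        (fun N : ℕ => fun s : ℂ => ∑ n ∈ Finset.range N, a (n + 1) / ((n : ℂ) + 1) ^ s)
        f atTop {s : ℂ | 1 + ε ≤ s.re})
    (hnz : ∃ s : ℂ, 1 < s.re ∧ f s ≠ 0)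
    (ρ : ℂ) (hρ : f ρ = 0)
    (δ : ℝ) (hδ : 0 < δ) (hδβ : δ < ρ.re - 1) :
    ∃ c : ℝ, 0 < c ∧ ∃ T₀ : ℝ, ∀ T : ℝ, T₀ ≤ T →
      c * T ≤ ({s : ℂ | f s = 0 ∧ |s.re - ρ.re| < δ ∧ 0 < s.im ∧ s.im < T}.ncard : ℝ) := by
  set σ := ρ.re - δ
  have hσU : {z : ℂ | σ ≤ z.re} ⊆ {s : ℂ | 1 < s.re} := fun z (hz : σ ≤ z.re) =>
    show 1 < z.re by linarith
  have hfd : DifferentiableOn ℂ f {s : ℂ | 1 < s.re} :=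
    differentiableOn_of_tendstoUniformlyOn_dirichletPartialSum hunif
  have hf := hfd.analyticOnNhd (isOpen_lt continuous_const continuous_re)
  obtain ⟨r, ⟨hr, hrδ⟩, hsphere⟩ := exists_forall_sphere_of_eventually_nhdsNE
    (hf.eventually_ne_zero_nhdsNE (convex_halfSpace_re_gt 1).isPreconnected hnz
      (show 1 < ρ.re by linarith)) hδ
  have hball : closedBall ρ r ⊆ {z : ℂ | σ ≤ z.re} := fun z hz =>
    show σ ≤ z.re by linarith [(closedBall_subset_reProdIm ρ r hz).1.1]
  obtain ⟨m, hm, hfm⟩ := (isCompact_sphere ρ r).exists_forall_le'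
    (hfd.continuousOn.norm.mono (sphere_subset_closedBall.trans (hball.trans hσU)))
    fun z hz => norm_pos_iff.2 (hsphere z hz)
  have hconv : TendstoUniformlyOn (dirichletPartialSum a) f atTop {z : ℂ | σ ≤ z.re} := by
    have := hunif (σ - 1) (by linarith)
    rwa [add_sub_cancel] at this
  obtain ⟨M, hM⟩ := isRelativelyDense_almostPeriods (by linarith) hconv (half_pos hm)
  have hM₀ : 0 ≤ M := by obtain ⟨t, -, h₁, h₂⟩ := hM 0; linarith
  -- `t` moves the disc of radius `r` around `ρ` into the `j`-th window of height `M + 2r + 1`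
  have hwindow (j : ℕ) : ∃ z, (f z = 0 ∧ |z.re - ρ.re| < δ) ∧
      z.im ∈ Ioo (j * (M + 2 * r + 1)) ((j + 1) * (M + 2 * r + 1)) := by
    obtain ⟨t, ht, ht₁, ht₂⟩ := hM (j * (M + 2 * r + 1) + r + 1 / 2 - ρ.im)
    obtain ⟨z, hfz, ⟨hre₁, hre₂⟩, him₁, him₂⟩ :=
      exists_zero_near_add_mul_I_of_almostPeriod (hfd.mono hσU) hρ hr hball hfm ht
    exact ⟨z, ⟨hfz, abs_lt.2 ⟨by linarith, by linarith⟩⟩, by linarith, by linarith⟩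
  simpa only [and_assoc] using exists_pos_mul_le_ncard_of_forall_exists_mem_Ioo (by positivity)
    (finite_setOf_eq_zero_abs_re_sub_lt hf hnz (by linarith : 1 < ρ.re - δ)) hwindow

theorem zeros_in_strip_of_dirichlet_series_zero
    (f : ℂ → ℂ) (a : ℕ → ℂ)
    (hsum : ∀ s : ℂ, 1 < s.re →
      HasSum (fun n : ℕ => a (n + 1) / ((n : ℂ) + 1) ^ s) (f s))
    (hunif : ∀ ε : ℝ, 0 < ε →
      TendstoUniformlyOn
        (fun N : ℕ => fun s : ℂ => ∑ n ∈ Finset.range N, a (n + 1) / ((n : ℂ) + 1) ^ s)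
        f atTop {s : ℂ | 1 + ε ≤ s.re})
    (hnz : ∃ s : ℂ, 1 < s.re ∧ f s ≠ 0)
    (ρ : ℂ) (hρ : f ρ = 0) (hβ : 1 < ρ.re)
    (δ : ℝ) (hδ : 0 < δ) (hδβ : δ < ρ.re - 1) :
    ∃ c : ℝ, 0 < c ∧ ∃ T₀ : ℝ, ∀ T : ℝ, T₀ ≤ T →
      c * T ≤ ({s : ℂ | f s = 0 ∧ |s.re - ρ.re| < δ ∧ 0 < s.im ∧ s.im < T}.ncard : ℝ) :=
  zeros_in_strip_of_dirichlet_series_zero_general f a hunif hnz ρ hρ δ hδ hδβ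
end

section
/- Fix σ > 1/2 and ε > 0. Let b_m be complex numbers with |b_m| ≤ d(m), and for n ≥ 1 let S_n = {m ≥ 1 : all prime factors of m are ≤ p_n}, where p_n is the n-th prime. Then limsup_{T→∞} (1/T) ∫₁^T |Σ_{m ∈ S_n, m > p_n} b_m m^{−σ−it}|² dt ≤ C p_n^{1−2σ+ε} for a constant C depending only on σ and ε. -/
/-
Write `a_m = b_m m^{-σ}`. The Dirichlet polynomial is an absolutely convergent sum
`∑ a_m e^{-i t log m}` with distinct frequencies `log m`, so expanding `|∑ a_m e^{-i t log m}|²`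
into the double series `∑ a_m conj(a_k) e^{i t (log k - log m)}` and averaging term by term
(dominated convergence) kills every off-diagonal term: the mean value is `∑ |b_m|² m^{-2σ}`.
Absolute convergence comes from `d(m) ≪_δ m^δ` and the finite Euler product over `p ≤ p_n`.
Rankin's trick bounds the tail: for `m > p_n`,
`m^{2δ-2σ} = m^{1-2σ+3δ} m^{-1-δ} ≤ p_n^{1-2σ+3δ} m^{-1-δ}`, and `∑ m^{-1-δ} = ζ(1+δ)` is finite.
-/

open MeasureTheory Filter Topology Complex ComplexConjugate

noncomputable def timeAverage {E : Type*} [NormedAddCommGroup E] [NormedSpace ℝ E] (T₀ : ℝ)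
    (f : ℝ → E) (T : ℝ) : E :=
  T⁻¹ • ∫ t in T₀..T, f t

section timeAverage

variable {E : Type*} [NormedAddCommGroup E] [NormedSpace ℝ E] {T₀ : ℝ}

lemma tendsto_timeAverage_const [CompleteSpace E] (c : E) :
    Tendsto (timeAverage T₀ fun _ => c) atTop (𝓝 c) := by
  have h : Tendsto (fun T : ℝ => (1 - T₀ * T⁻¹) • c) atTop (𝓝 ((1 - T₀ * 0) • c)) :=
    ((tendsto_inv_atTop_zero.const_mul T₀).const_sub 1).smul_const c
  rw [mul_zero, sub_zero, one_smul] at h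
  refine h.congr' ?_
  filter_upwards [eventually_ne_atTop 0] with T hT
  rw [timeAverage, intervalIntegral.integral_const, smul_smul]
  congr 1
  field_simp

lemma norm_timeAverage_le (hT₀ : 0 ≤ T₀) {T : ℝ} (hT : T₀ ≤ T) {f : ℝ → E} {M : ℝ}
    (hf : ∀ t, ‖f t‖ ≤ M) : ‖timeAverage T₀ f T‖ ≤ M := by
  have hM : 0 ≤ M := (norm_nonneg _).trans (hf 0)
  have hint := intervalIntegral.norm_integral_le_of_norm_le_const (a := T₀) (b := T)
    fun t _ => hf t
  rw [abs_of_nonneg (sub_nonneg.mpr hT)] at hint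
  have hT0 : 0 ≤ T := hT₀.trans hT
  rw [timeAverage, norm_smul, norm_inv, Real.norm_of_nonneg hT0]
  calc T⁻¹ * ‖∫ t in T₀..T, f t‖ ≤ T⁻¹ * (M * (T - T₀)) := by gcongr
    _ ≤ M := by
      rcases hT0.eq_or_lt with rfl | hTpos
      · simpa using hM
      · rw [inv_mul_le_iff₀ hTpos]
        nlinarith

lemma timeAverage_tsum [CompleteSpace E] {ι : Type*} [Countable ι] {F : ι → ℝ → E} {bound : ι → ℝ}
    (hF : ∀ i, Continuous (F i)) (hFb : ∀ i t, ‖F i t‖ ≤ bound i) (hb : Summable bound)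
    (T : ℝ) :
    timeAverage T₀ (fun t => ∑' i, F i t) T = ∑' i, timeAverage T₀ (F i) T := by
  have hs := intervalIntegral.hasSum_integral_of_dominated_convergence (μ := volume) (a := T₀)
    (b := T) (fun i _ => bound i) (fun i => (hF i).aestronglyMeasurable)
    (fun i => ae_of_all _ fun t _ => hFb i t) (ae_of_all _ fun _ _ => hb) intervalIntegrable_const
    (ae_of_all _ fun t _ => (hb.of_norm_bounded (hFb · t)).hasSum)
  rw [timeAverage, ← hs.tsum_eq, ← hs.summable.tsum_const_smul]
  rfl

lemma timeAverage_const_mul (c : ℂ) (f : ℝ → ℂ) (T : ℝ) :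
    timeAverage T₀ (fun t => c * f t) T = c * timeAverage T₀ f T := by
  rw [timeAverage, timeAverage, intervalIntegral.integral_const_mul, mul_smul_comm]

lemma ofReal_timeAverage (f : ℝ → ℝ) (T : ℝ) :
    ((timeAverage T₀ f T : ℝ) : ℂ) = timeAverage T₀ (fun t => (f t : ℂ)) T := by
  rw [timeAverage, timeAverage, intervalIntegral.integral_ofReal, real_smul, ofReal_inv,
    smul_eq_mul, ofReal_mul, ofReal_inv]

lemma tendsto_timeAverage_cexp {ω : ℝ} (hω : ω ≠ 0) :
    Tendsto (timeAverage T₀ fun t => cexp (ω * t * I)) atTop (𝓝 0) := by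
  have hωI : (ω : ℂ) * I ≠ 0 := mul_ne_zero (ofReal_ne_zero.mpr hω) I_ne_zero
  have hunit : ∀ t : ℝ, ‖cexp (ω * I * t)‖ = 1 := fun t => by
    rw [mul_right_comm, ← ofReal_mul, norm_exp_ofReal_mul_I]
  have hbound : ∀ T : ℝ, ‖∫ t in T₀..T, cexp (ω * t * I)‖ ≤ 2 / ‖(ω : ℂ) * I‖ := fun T => by
    simp_rw [mul_right_comm _ _ I]
    rw [integral_exp_mul_complex hωI, norm_div]
    gcongr
    exact (norm_sub_le _ _).trans (by rw [hunit, hunit]; norm_num)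
  refine squeeze_zero_norm' ?_ ((tendsto_inv_atTop_zero.mul_const (2 / ‖(ω : ℂ) * I‖)).trans
    (by rw [zero_mul]))
  filter_upwards [eventually_gt_atTop 0] with T hT
  rw [timeAverage, norm_smul, norm_inv, Real.norm_of_nonneg hT.le]
  exact mul_le_mul_of_nonneg_left (hbound T) (inv_nonneg.mpr hT.le)

end timeAverage

lemma ofReal_sq_norm_tsum {ι : Type*} {z : ι → ℂ} (hz : Summable (‖z ·‖)) :
    ((‖∑' i, z i‖ ^ 2 : ℝ) : ℂ) = ∑' p : ι × ι, z p.1 * conj (z p.2) := by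
  rw [← normSq_eq_norm_sq, ← mul_conj, conj_tsum,
    tsum_mul_tsum_of_summable_norm hz (by simpa only [RCLike.norm_conj] using hz)]

theorem tendsto_timeAverage_sq_norm_tsum {ι : Type*} [Countable ι] {a : ι → ℂ}
    (ha : Summable (‖a ·‖)) {ω : ι → ℝ} (hω : Function.Injective ω) {T₀ : ℝ} (hT₀ : 0 ≤ T₀) :
    Tendsto (timeAverage T₀ fun t => ‖∑' i, a i * cexp (ω i * t * I)‖ ^ 2) atTop
      (𝓝 (∑' i, ‖a i‖ ^ 2)) := by
  classical
  set A : ι × ι → ℂ := fun p => a p.1 * conj (a p.2)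
  set e : ι × ι → ℝ → ℂ := fun p t => cexp ((ω p.1 - ω p.2) * t * I)
  have hA : Summable (‖A ·‖) :=
    Summable.mul_norm (f := a) (g := fun i => conj (a i)) ha (by simpa only [RCLike.norm_conj])
  have he : ∀ p t, ‖e p t‖ = 1 := fun p t => by
    simp only [e]; rw [← ofReal_sub, ← ofReal_mul, norm_exp_ofReal_mul_I]
  have hexpand : ∀ t : ℝ, ((‖∑' i, a i * cexp (ω i * t * I)‖ ^ 2 : ℝ) : ℂ) =
      ∑' p, A p * e p t := fun t => by
    have hz : Summable fun i => ‖a i * cexp (ω i * t * I)‖ := by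
      refine ha.congr fun i => ?_
      rw [norm_mul, ← ofReal_mul, norm_exp_ofReal_mul_I, mul_one]
    rw [ofReal_sq_norm_tsum hz]
    refine tsum_congr fun p => ?_
    simp only [A, e, map_mul, ← exp_conj, conj_ofReal, conj_I, sub_mul, exp_sub, mul_neg, exp_neg]
    ring
  have hmean : ∀ T, ((timeAverage T₀ (fun t => ‖∑' i, a i * cexp (ω i * t * I)‖ ^ 2) T : ℝ) : ℂ)
      = ∑' p, A p * timeAverage T₀ (e p) T := fun T => by
    rw [ofReal_timeAverage]
    simp_rw [hexpand, ← timeAverage_const_mul]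
    exact timeAverage_tsum (F := fun p t => A p * e p t)
      (fun p => continuous_const.mul (by fun_prop)) (fun p t => by rw [norm_mul, he, mul_one]) hA T
  have hlim : ∀ p : ι × ι, Tendsto (fun T => A p * timeAverage T₀ (e p) T) atTop
      (𝓝 (if p.1 = p.2 then A p else 0)) := fun p => by
    split_ifs with hp
    · simpa [e, hp] using (tendsto_timeAverage_const (T₀ := T₀) (1 : ℂ)).const_mul (A p)
    · simpa using (tendsto_timeAverage_cexp (T₀ := T₀)
        (sub_ne_zero.mpr (hω.ne hp))).const_mul (A p)
  have hbound : ∀ᶠ T in atTop, ∀ p, ‖A p * timeAverage T₀ (e p) T‖ ≤ ‖A p‖ := by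
    filter_upwards [eventually_ge_atTop T₀] with T hT p
    rw [norm_mul]
    exact mul_le_of_le_one_right (norm_nonneg _)
      (norm_timeAverage_le hT₀ hT fun t => (he p t).le)
  have hdiag : ∑' p, (if p.1 = p.2 then A p else 0) = ((∑' i, ‖a i‖ ^ 2 : ℝ) : ℂ) := by
    have hsupp : Function.support (fun p : ι × ι => if p.1 = p.2 then A p else 0) ⊆
        Set.range fun i => (i, i) := fun p hp =>
      ⟨p.1, Prod.ext rfl (by_contra fun h => hp (if_neg h))⟩
    rw [ofReal_tsum, ← Function.Injective.tsum_eq (fun i j h => congrArg Prod.fst h) hsupp]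
    refine tsum_congr fun i => ?_
    rw [if_pos rfl, ← normSq_eq_norm_sq, ← mul_conj]
  have hC := tendsto_tsum_of_dominated_convergence hA hlim hbound
  simp_rw [← hmean, hdiag] at hC
  exact ((continuous_re.tendsto _).comp hC).congr fun T => ofReal_re _

lemma add_one_le_mul_pow {y₀ y : ℝ} (hy₀ : 1 < y₀) (hy : y₀ ≤ y) (a : ℕ) :
    (a : ℝ) + 1 ≤ (1 + (y₀ - 1)⁻¹) * y ^ a := by
  have hd : 0 < y₀ - 1 := sub_pos.mpr hy₀
  calc (a : ℝ) + 1 ≤ (1 + (y₀ - 1)⁻¹) * (1 + a * (y₀ - 1)) := by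
        have : (y₀ - 1)⁻¹ * (a * (y₀ - 1)) = a := by field_simp
        nlinarith [inv_pos.mpr hd, Nat.cast_nonneg (α := ℝ) a]
    _ ≤ (1 + (y₀ - 1)⁻¹) * y ^ a := by
        gcongr
        calc 1 + a * (y₀ - 1) ≤ (1 + (y₀ - 1)) ^ a := one_add_mul_le_pow (by linarith) a
          _ ≤ y ^ a := by gcongr; linarith

lemma add_one_le_pow_of_two_le {y : ℝ} (hy : 2 ≤ y) (a : ℕ) : (a : ℝ) + 1 ≤ y ^ a :=
  calc (a : ℝ) + 1 ≤ 1 + a * (y - 1) := by nlinarith [Nat.cast_nonneg (α := ℝ) a]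
    _ ≤ (1 + (y - 1)) ^ a := one_add_mul_le_pow (by linarith) a
    _ = y ^ a := by rw [add_sub_cancel]

lemma natCast_rpow_eq_prod_primeFactors {m : ℕ} (hm : m ≠ 0) (δ : ℝ) :
    (m : ℝ) ^ δ = ∏ p ∈ m.primeFactors, ((p : ℝ) ^ δ) ^ m.factorization p := by
  conv_lhs => rw [Nat.prod_primeFactors_pow_factorization hm]
  push_cast
  rw [← Real.finsetProd_rpow _ _ fun p _ => by positivity]
  exact Finset.prod_congr rfl fun p _ => (Real.rpow_pow_comm (Nat.cast_nonneg p) δ _).symm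

theorem exists_card_divisors_le_mul_rpow {δ : ℝ} (hδ : 0 < δ) :
    ∃ C : ℝ, ∀ m : ℕ, m ≠ 0 → (m.divisors.card : ℝ) ≤ C * (m : ℝ) ^ δ := by
  have h2δ : 1 < (2 : ℝ) ^ δ := Real.one_lt_rpow one_lt_two hδ
  set K : ℝ := 1 + ((2 : ℝ) ^ δ - 1)⁻¹
  have hK : 1 ≤ K := le_add_of_nonneg_right (inv_nonneg.mpr (sub_pos.mpr h2δ).le)
  set M : ℕ := ⌈(2 : ℝ) ^ δ⁻¹⌉₊
  refine ⟨K ^ M, fun m hm => ?_⟩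
  -- A prime `p ≥ 2 ^ δ⁻¹` has `a + 1 ≤ 2 ^ a ≤ (p ^ δ) ^ a`, so only the primes below `M` cost
  -- a factor, at most `K` each.
  have hfactor : ∀ p ∈ m.primeFactors, (m.factorization p : ℝ) + 1 ≤
      (if p < M then K else 1) * ((p : ℝ) ^ δ) ^ m.factorization p := fun p hp => by
    have hp : (2 : ℝ) ≤ p := by exact_mod_cast (Nat.prime_of_mem_primeFactors hp).two_le
    split_ifs with hpM
    · exact add_one_le_mul_pow h2δ (by gcongr) _
    · rw [one_mul]
      refine add_one_le_pow_of_two_le ?_ _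
      calc (2 : ℝ) = ((2 : ℝ) ^ δ⁻¹) ^ δ := by
            rw [← Real.rpow_mul zero_le_two, inv_mul_cancel₀ hδ.ne', Real.rpow_one]
        _ ≤ (p : ℝ) ^ δ := by
            gcongr
            exact (Nat.le_ceil _).trans (by exact_mod_cast not_lt.mp hpM)
  have hsmall : ∏ p ∈ m.primeFactors, (if p < M then K else 1) ≤ K ^ M := by
    rw [Finset.prod_ite, Finset.prod_const, Finset.prod_const_one, mul_one]
    refine pow_le_pow_right₀ hK
      ((Finset.card_le_card fun p hp => ?_).trans (Finset.card_range M).le)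
    exact Finset.mem_range.mpr (Finset.mem_filter.mp hp).2
  calc (m.divisors.card : ℝ) = ∏ p ∈ m.primeFactors, ((m.factorization p : ℝ) + 1) := by
        rw [Nat.card_divisors hm]; push_cast; rfl
    _ ≤ ∏ p ∈ m.primeFactors, (if p < M then K else 1) * ((p : ℝ) ^ δ) ^ m.factorization p :=
        Finset.prod_le_prod (fun _ _ => by positivity) hfactor
    _ ≤ K ^ M * (m : ℝ) ^ δ := by
        rw [Finset.prod_mul_distrib, ← natCast_rpow_eq_prod_primeFactors hm]
        gcongr

lemma summable_rpow_neg_smoothNumbers {r : ℝ} (hr : 0 < r) (N : ℕ) :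
    Summable fun m : N.smoothNumbers => (m : ℝ) ^ (-r) := by
  let f : ℕ →* ℝ :=
    { toFun := fun m => (m : ℝ) ^ (-r)
      map_one' := by simp
      map_mul' := fun x y => by push_cast; exact Real.mul_rpow (by positivity) (by positivity) }
  refine (EulerProduct.summable_and_hasSum_smoothNumbers_prod_primesBelow_geometric
    (f := f) (fun {p} hp => ?_) N).1.of_norm
  change ‖(p : ℝ) ^ (-r)‖ < 1
  rw [Real.norm_of_nonneg (by positivity)]
  exact Real.rpow_lt_one_of_one_lt_of_neg (by exact_mod_cast hp.one_lt) (neg_lt_zero.mpr hr)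

lemma tsum_subtype_le_of_le_rpow_neg {s : Set ℕ} {P : ℕ} (hP : 0 < P) (hs : ∀ m ∈ s, P ≤ m)
    {v : ℕ → ℝ} (hv₀ : ∀ m ∈ s, 0 ≤ v m) {D κ η : ℝ} (hD : 0 ≤ D)
    (hv : ∀ m ∈ s, v m ≤ D * (m : ℝ) ^ (-κ)) (hη : 1 < η) (hηκ : η ≤ κ) :
    ∑' m : s, v m ≤ D * (P : ℝ) ^ (η - κ) * ∑' m : ℕ, (m : ℝ) ^ (-η) := by
  have hζ : Summable fun m : ℕ => (m : ℝ) ^ (-η) := Real.summable_nat_rpow.mpr (by linarith)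
  have hle : ∀ m : s, v m ≤ D * (P : ℝ) ^ (η - κ) * (m : ℝ) ^ (-η) := fun ⟨m, hm⟩ => by
    have hPm : (P : ℝ) ≤ m := by exact_mod_cast hs m hm
    have hm0 : (0 : ℝ) < m := (Nat.cast_pos.mpr hP).trans_le hPm
    calc v m ≤ D * (m : ℝ) ^ (-κ) := hv m hm
      _ = D * ((m : ℝ) ^ (η - κ) * (m : ℝ) ^ (-η)) := by
          rw [← Real.rpow_add hm0]; ring_nf
      _ ≤ D * ((P : ℝ) ^ (η - κ) * (m : ℝ) ^ (-η)) := by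
          have := Real.rpow_le_rpow_of_nonpos (Nat.cast_pos.mpr hP) hPm (sub_nonpos.mpr hηκ)
          gcongr
      _ = _ := by ring
  have hmaj : Summable fun m : s => D * (P : ℝ) ^ (η - κ) * (m : ℝ) ^ (-η) :=
    (hζ.subtype s).mul_left _
  calc ∑' m : s, v m ≤ ∑' m : s, D * (P : ℝ) ^ (η - κ) * (m : ℝ) ^ (-η) :=
        Summable.tsum_le_tsum hle (hmaj.of_nonneg_of_le (fun m => hv₀ m m.2) hle) hmaj
    _ = D * (P : ℝ) ^ (η - κ) * ∑' m : s, (m : ℝ) ^ (-η) := tsum_mul_left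
    _ ≤ D * (P : ℝ) ^ (η - κ) * ∑' m : ℕ, (m : ℝ) ^ (-η) := by
        gcongr
        exact hζ.tsum_subtype_le _ s fun m => by positivity

lemma ofReal_cpow_neg_add_mul_I {x : ℝ} (hx : 0 < x) (σ t : ℝ) :
    (x : ℂ) ^ (-((σ : ℂ) + t * I)) = ((x ^ (-σ) : ℝ) : ℂ) * cexp ((-Real.log x : ℝ) * t * I) := by
  have hx' : (x : ℂ) ≠ 0 := ofReal_ne_zero.mpr hx.ne'
  rw [neg_add, cpow_add _ _ hx', ofReal_cpow hx.le, cpow_def_of_ne_zero hx' (-(t * I)),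
    ← ofReal_log hx.le, ofReal_neg, ofReal_neg]
  ring_nf

theorem tendsto_timeAverage_sq_norm_dirichletSeries {s : Set ℕ} (hs : ∀ m ∈ s, 0 < m)
    {c : ℕ → ℂ} {σ : ℝ} (hc : Summable fun m : s => ‖c m‖ * (m : ℝ) ^ (-σ)) {T₀ : ℝ}
    (hT₀ : 0 ≤ T₀) :
    Tendsto (timeAverage T₀ fun t =>
        ‖∑' m : ℕ, s.indicator (fun m => c m * (m : ℂ) ^ (-((σ : ℂ) + t * I))) m‖ ^ 2) atTop
      (𝓝 (∑' m : s, (‖c m‖ * (m : ℝ) ^ (-σ)) ^ 2)) := by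
  have hpos : ∀ m : s, (0 : ℝ) < m := fun m => Nat.cast_pos.mpr (hs m m.2)
  have hnorm : ∀ m : s, ‖c m * (((m : ℝ) ^ (-σ) : ℝ) : ℂ)‖ = ‖c m‖ * (m : ℝ) ^ (-σ) := fun m => by
    rw [norm_mul, norm_real, Real.norm_of_nonneg (Real.rpow_nonneg (hpos m).le _)]
  have hinj : Function.Injective fun m : s => -Real.log m := fun m k h =>
    Subtype.ext (Nat.cast_injective (Real.log_injOn_pos (hpos m) (hpos k) (neg_inj.mp h)))
  have hseries : ∀ t : ℝ,
      ∑' m : ℕ, s.indicator (fun m => c m * (m : ℂ) ^ (-((σ : ℂ) + t * I))) m =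
        ∑' m : s, c m * (((m : ℝ) ^ (-σ) : ℝ) : ℂ) * cexp ((-Real.log m : ℝ) * t * I) :=
    fun t => by
      rw [← tsum_subtype]
      refine tsum_congr fun m => ?_
      rw [← ofReal_natCast, ofReal_cpow_neg_add_mul_I (hpos m), ← mul_assoc]
  simp_rw [hseries, ← hnorm]
  exact tendsto_timeAverage_sq_norm_tsum (hc.congr fun m => (hnorm m).symm) hinj hT₀

theorem limsup_timeAverage_sq_norm_le {s : Set ℕ} {N P : ℕ} (hP : 0 < P)
    (hsP : ∀ m ∈ s, P ≤ m) (hsN : s ⊆ N.smoothNumbers) {c : ℕ → ℂ} {C δ σ : ℝ} (hδ : 0 < δ)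
    (hδσ : 3 * δ ≤ 2 * σ - 1) (hc : ∀ m ∈ s, ‖c m‖ ≤ C * (m : ℝ) ^ δ) {T₀ : ℝ} (hT₀ : 0 ≤ T₀) :
    limsup (timeAverage T₀ fun t =>
        ‖∑' m : ℕ, s.indicator (fun m => c m * (m : ℂ) ^ (-((σ : ℂ) + t * I))) m‖ ^ 2) atTop
      ≤ C ^ 2 * (P : ℝ) ^ (1 - 2 * σ + 3 * δ) * ∑' m : ℕ, (m : ℝ) ^ (-(1 + δ)) := by
  have hpos : ∀ m ∈ s, 0 < m := fun m hm => hP.trans_le (hsP m hm)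
  have hcoeff : ∀ m ∈ s, ‖c m‖ * (m : ℝ) ^ (-σ) ≤ C * (m : ℝ) ^ (-(σ - δ)) := fun m hm => by
    have hm0 : (0 : ℝ) < m := Nat.cast_pos.mpr (hpos m hm)
    calc ‖c m‖ * (m : ℝ) ^ (-σ) ≤ C * (m : ℝ) ^ δ * (m : ℝ) ^ (-σ) := by gcongr; exact hc m hm
      _ = C * (m : ℝ) ^ (-(σ - δ)) := by rw [mul_assoc, ← Real.rpow_add hm0]; ring_nf
  have hsum : Summable fun m : s => ‖c m‖ * (m : ℝ) ^ (-σ) :=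
    (((summable_rpow_neg_smoothNumbers (by linarith) N).comp_injective
      (Set.inclusion_injective hsN)).mul_left C).of_nonneg_of_le
      (fun m => by positivity) fun m => hcoeff m m.2
  have hsq : ∀ m ∈ s, (‖c m‖ * (m : ℝ) ^ (-σ)) ^ 2 ≤ C ^ 2 * (m : ℝ) ^ (-((σ - δ) * 2)) :=
    fun m hm => by
      rw [neg_mul_eq_neg_mul, Real.rpow_mul (Nat.cast_nonneg m), Real.rpow_two, ← mul_pow]
      exact pow_le_pow_left₀ (by positivity) (hcoeff m hm) 2
  rw [(tendsto_timeAverage_sq_norm_dirichletSeries hpos hsum hT₀).limsup_eq]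
  convert tsum_subtype_le_of_le_rpow_neg hP hsP (fun _ _ => sq_nonneg _) (sq_nonneg C) hsq
    (η := 1 + δ) (by linarith) (by linarith) using 4
  ring

theorem smooth_number_tail_mean_value (σ ε : ℝ) (hσ : 1 / 2 < σ) (hε : 0 < ε)
    (b : ℕ → ℂ) (hb : ∀ m : ℕ, 1 ≤ m → ‖b m‖ ≤ (m.divisors.card : ℝ)) :
    ∃ C : ℝ, ∀ n : ℕ, 1 ≤ n →
      Filter.limsup (fun T : ℝ => (1 / T) * ∫ t in (1:ℝ)..T,
          ‖∑' m : ℕ,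
            Set.indicator
              {m : ℕ | Nat.nth Nat.Prime (n - 1) < m ∧
                ∀ q : ℕ, q.Prime → q ∣ m → q ≤ Nat.nth Nat.Prime (n - 1)}
              (fun m => b m * (m : ℂ) ^ (-((σ : ℂ) + t * Complex.I))) m‖ ^ 2) atTop
        ≤ C * (Nat.nth Nat.Prime (n - 1) : ℝ) ^ (1 - 2 * σ + ε) := by
  obtain ⟨δ, hδ, hδε, hδσ⟩ : ∃ δ : ℝ, 0 < δ ∧ 3 * δ ≤ ε ∧ 3 * δ ≤ 2 * σ - 1 :=
    ⟨min ε (2 * σ - 1) / 3, div_pos (lt_min hε (by linarith)) three_pos,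
      by linarith [min_le_left ε (2 * σ - 1)], by linarith [min_le_right ε (2 * σ - 1)]⟩
  obtain ⟨C, hC⟩ := exists_card_divisors_le_mul_rpow hδ
  refine ⟨C ^ 2 * ∑' m : ℕ, (m : ℝ) ^ (-(1 + δ)), fun n _ => ?_⟩
  set P := Nat.nth Nat.Prime (n - 1)
  have hP : 0 < P := (Nat.prime_nth_prime _).pos
  have hmean := limsup_timeAverage_sq_norm_le (s := {m | P < m ∧ ∀ q : ℕ, q.Prime → q ∣ m → q ≤ P})
    (c := b) (σ := σ) hP (fun m hm => hm.1.le)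
    (fun m hm => Nat.mem_smoothNumbers'.mpr fun q hq hqm => Nat.lt_succ_of_le (hm.2 q hq hqm))
    hδ hδσ (fun m hm => (hb m (hP.trans hm.1)).trans (hC m (hP.trans hm.1).ne')) zero_le_one
  unfold timeAverage at hmean
  simp only [smul_eq_mul, inv_eq_one_div] at hmean
  refine hmean.trans ?_
  rw [mul_right_comm]
  gcongr
  · exact_mod_cast hP
end
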